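/- arXiv:1401.0399 — 2 statements merged into one kernel-verified Lean document; each statement's English description precedes it below -/
import Mathlib

section
/- Let Q : ℝ² → M₂(ℝ) be a polynomial map (each matrix entry a real polynomial in k_x, k_y). Then Q(Rk) = R Q(k) Rᵀ for all R ∈ SO(2) and all k ∈ ℝ² if and only if there exist one-variable real polynomials m, z, n, h such that Q(k) = m(s(k)) I₂ + z(s(k)) k kᵀ + n(s(k)) J₀ + h(s(k)) k (k^⊥)ᵀ for all k ∈ ℝ². -/
open Matrix

/-- The squared norm `s(k) = k_x² + k_y²`. -/
def sq2 (k : Fin 2 → ℝ) : ℝ := k 0 ^ 2 + k 1 ^ 2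

/-- The perpendicular vector `k^⊥ = (k_y, −k_x)`. -/
def perp2 (k : Fin 2 → ℝ) : Fin 2 → ℝ := ![k 1, -k 0]

/-- The matrix `J₀` with rows `(0, 1)` and `(−1, 0)`, so that `J₀ k = k^⊥`. -/
def J0mat : Matrix (Fin 2) (Fin 2) ℝ := !![0, 1; -1, 0]

/-!
Restricted to the `x`-axis, `Q` is polynomial in `r` and, since `-I₂` is a rotation, even, so
`Q (√s, 0) = A(s)` for a polynomial matrix `A`. Rotating `(√s, 0)` onto `k` by
`M_k / √s`, where `M_k = [[k₀, -k₁], [k₁, k₀]]`, gives `s • Q k = M_k A(s) M_kᵀ`. The traceless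
symmetric part of `A(0) = Q 0` vanishes because `Q 0` commutes with the rotation `J₀`; hence it
is divisible by `s`, and dividing by `s` yields the isotropic form. Conversely, `s` is rotation
invariant, `R J₀ Rᵀ = det R • J₀` and `k^⊥ = J₀ k`, so each of `I₂`, `k kᵀ`, `J₀`, `k (k^⊥)ᵀ`
transforms correctly.
-/

open Polynomial

def isotropicField (m z n h : ℝ[X]) (k : Fin 2 → ℝ) : Matrix (Fin 2) (Fin 2) ℝ :=
  m.eval (sq2 k) • 1 + z.eval (sq2 k) • vecMulVec k k + n.eval (sq2 k) • J0mat
    + h.eval (sq2 k) • vecMulVec k (perp2 k)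

def IsRotationEquivariant (Q : (Fin 2 → ℝ) → Matrix (Fin 2) (Fin 2) ℝ) : Prop :=
  ∀ R : Matrix (Fin 2) (Fin 2) ℝ, Rᵀ * R = 1 → R.det = 1 → ∀ k, Q (R *ᵥ k) = R * Q k * Rᵀ

theorem isotropicField_apply (m z n h : ℝ[X]) (k : Fin 2 → ℝ) (i j : Fin 2) :
    isotropicField m z n h k i j = m.eval (sq2 k) * (1 : Matrix (Fin 2) (Fin 2) ℝ) i j
      + z.eval (sq2 k) * (k i * k j) + n.eval (sq2 k) * J0mat i j
      + h.eval (sq2 k) * (k i * perp2 k j) := by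
  simp [isotropicField, vecMulVec_apply]

theorem Polynomial.coeff_comp_neg_X {R : Type*} [CommRing R] (p : R[X]) (n : ℕ) :
    (p.comp (-X)).coeff n = (-1) ^ n * p.coeff n := by
  induction p using Polynomial.induction_on' with
  | add p q hp hq => simp [add_comp, hp, hq, mul_add]
  | monomial k a =>
    rw [← C_mul_X_pow_eq_monomial, mul_comp, C_comp, pow_comp, X_comp, neg_pow, ← mul_assoc,
      ← C_1, ← C_neg, ← C_pow, ← C_mul, coeff_C_mul_X_pow, coeff_C_mul_X_pow]
    split_ifs with h <;> simp [h, mul_comm]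

theorem Polynomial.expand_contract_two_of_comp_neg_X {R : Type*} [CommRing R] [IsDomain R]
    [CharZero R] {p : R[X]} (hp : p.comp (-X) = p) : expand R 2 (contract 2 p) = p := by
  ext n
  rw [coeff_expand two_pos, coeff_contract two_ne_zero]
  split_ifs with h
  · rw [Nat.div_mul_cancel h]
  · have h' := p.coeff_comp_neg_X n
    rw [hp, (Nat.odd_iff.mpr (Nat.two_dvd_ne_zero.mp h)).neg_one_pow, neg_one_mul,
      self_eq_neg] at h'
    exact h'.symm

theorem Polynomial.exists_eval_sq_of_even {R : Type*} [CommRing R] [IsDomain R] [CharZero R]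
    {p : R[X]} (hp : ∀ r, p.eval (-r) = p.eval r) :
    ∃ g : R[X], ∀ r, p.eval r = g.eval (r ^ 2) := by
  have hcomp : p.comp (-X) = p := Polynomial.funext fun r => by simp [hp]
  exact ⟨contract 2 p, fun r => by rw [← expand_eval, expand_contract_two_of_comp_neg_X hcomp]⟩

theorem MvPolynomial.exists_polynomial_eval_eq_eval {R σ : Type*} [CommSemiring R]
    (P : MvPolynomial σ R) (g : σ → R[X]) :
    ∃ p : R[X], ∀ r, p.eval r = MvPolynomial.eval (fun i => (g i).eval r) P :=
  ⟨MvPolynomial.eval₂ Polynomial.C g P, fun r => by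
    rw [MvPolynomial.polynomial_eval_eval₂]; congr; ext; simp⟩

theorem sq2_eq_dotProduct (k : Fin 2 → ℝ) : sq2 k = k ⬝ᵥ k := by
  simp [sq2, dotProduct, Fin.sum_univ_two, sq]

theorem sq2_nonneg (k : Fin 2 → ℝ) : 0 ≤ sq2 k := by
  unfold sq2; positivity

theorem sq2_eq_zero_iff {k : Fin 2 → ℝ} : sq2 k = 0 ↔ k = 0 := by
  rw [sq2_eq_dotProduct, dotProduct_self_eq_zero]

theorem sq2_pos {k : Fin 2 → ℝ} (hk : k ≠ 0) : 0 < sq2 k :=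
  (sq2_nonneg k).lt_of_ne' (sq2_eq_zero_iff.not.mpr hk)

theorem sq2_mulVec {R : Matrix (Fin 2) (Fin 2) ℝ} (hR : Rᵀ * R = 1) (k : Fin 2 → ℝ) :
    sq2 (R *ᵥ k) = sq2 k := by
  rw [sq2_eq_dotProduct, sq2_eq_dotProduct, dotProduct_mulVec, ← mulVec_transpose,
    mulVec_mulVec, hR, one_mulVec]

theorem perp2_eq_J0mat_mulVec (k : Fin 2 → ℝ) : perp2 k = J0mat *ᵥ k := by
  ext i; fin_cases i <;> simp [perp2, J0mat, vecHead, vecTail]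

theorem transpose_J0mat_mul_self : J0matᵀ * J0mat = 1 := by
  ext i j; fin_cases i <;> fin_cases j <;> simp [J0mat, mul_apply, Fin.sum_univ_two]

theorem det_J0mat : J0mat.det = 1 := by
  simp [J0mat, det_fin_two_of]

theorem commute_J0mat_iff {A : Matrix (Fin 2) (Fin 2) ℝ} :
    Commute J0mat A ↔ A 1 1 = A 0 0 ∧ A 1 0 = -A 0 1 := by
  rw [Commute, SemiconjBy, ← Matrix.ext_iff, Fin.forall_fin_two, Fin.forall_fin_two,
    Fin.forall_fin_two]
  simp only [J0mat, mul_apply, Fin.sum_univ_two, of_apply, cons_val', cons_val_fin_one,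
    cons_val_zero, cons_val_one, zero_mul, one_mul, zero_add, mul_zero, mul_neg, mul_one, add_zero,
    neg_mul, neg_inj]
  constructor
  · rintro ⟨⟨h00, h01⟩, -⟩; exact ⟨h01, h00⟩
  · rintro ⟨h11, h10⟩; simp [h11, h10]

theorem mul_J0mat_mul_transpose (R : Matrix (Fin 2) (Fin 2) ℝ) :
    R * J0mat * Rᵀ = R.det • J0mat := by
  ext i j
  fin_cases i <;> fin_cases j <;> simp [J0mat, det_fin_two, mul_apply, Fin.sum_univ_two] <;> ring

theorem mul_J0mat_of_transpose_mul_self {R : Matrix (Fin 2) (Fin 2) ℝ} (hR : Rᵀ * R = 1)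
    (hdet : R.det = 1) : R * J0mat = J0mat * R :=
  calc R * J0mat = R * J0mat * Rᵀ * R := by rw [Matrix.mul_assoc _ Rᵀ, hR, Matrix.mul_one]
    _ = J0mat * R := by rw [mul_J0mat_mul_transpose, hdet, one_smul]

theorem perp2_mulVec {R : Matrix (Fin 2) (Fin 2) ℝ} (hR : Rᵀ * R = 1) (hdet : R.det = 1)
    (k : Fin 2 → ℝ) : perp2 (R *ᵥ k) = R *ᵥ perp2 k := by
  rw [perp2_eq_J0mat_mulVec, perp2_eq_J0mat_mulVec, mulVec_mulVec, mulVec_mulVec,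
    mul_J0mat_of_transpose_mul_self hR hdet]

theorem vecMulVec_mulVec_mulVec {m n α : Type*} [CommSemiring α] [Fintype n] (R : Matrix m n α)
    (u v : n → α) : vecMulVec (R *ᵥ u) (R *ᵥ v) = R * vecMulVec u v * Rᵀ := by
  rw [mul_vecMulVec, vecMulVec_mul, vecMul_transpose]

theorem isRotationEquivariant_isotropicField (m z n h : ℝ[X]) :
    IsRotationEquivariant (isotropicField m z n h) := by
  intro R hR hdet k
  have hR' : R * Rᵀ = 1 := mul_eq_one_comm.mp hR
  simp only [isotropicField, sq2_mulVec hR, perp2_mulVec hR hdet, vecMulVec_mulVec_mulVec,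
    Matrix.mul_add, Matrix.add_mul, Matrix.mul_smul, Matrix.smul_mul, Matrix.mul_one, hR',
    mul_J0mat_mul_transpose, hdet, one_smul]

def rotScaleMatrix (k : Fin 2 → ℝ) : Matrix (Fin 2) (Fin 2) ℝ := !![k 0, -k 1; k 1, k 0]

theorem rotScaleMatrix_zero : rotScaleMatrix 0 = 0 := by
  ext i j; fin_cases i <;> fin_cases j <;> simp [rotScaleMatrix]

theorem transpose_rotScaleMatrix_mul_self (k : Fin 2 → ℝ) :
    (rotScaleMatrix k)ᵀ * rotScaleMatrix k = sq2 k • 1 := by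
  ext i j
  fin_cases i <;> fin_cases j <;> simp [rotScaleMatrix, sq2, mul_apply, Fin.sum_univ_two] <;> ring

theorem det_rotScaleMatrix (k : Fin 2 → ℝ) : (rotScaleMatrix k).det = sq2 k := by
  simp [rotScaleMatrix, sq2, det_fin_two_of]; ring

theorem rotScaleMatrix_mulVec_axis (k : Fin 2 → ℝ) (r : ℝ) :
    rotScaleMatrix k *ᵥ ![r, 0] = r • k := by
  ext i; fin_cases i <;> simp [rotScaleMatrix, mulVec, dotProduct, Fin.sum_univ_two, mul_comm]

theorem rotScaleMatrix_mul_mul_transpose {A : Matrix (Fin 2) (Fin 2) ℝ} {k : Fin 2 → ℝ}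
    {m z n h : ℝ[X]} (hm : m.eval (sq2 k) = A 1 1) (hn : n.eval (sq2 k) = -A 1 0)
    (hz : A 0 0 = A 1 1 + sq2 k * z.eval (sq2 k))
    (hh : A 0 1 = -A 1 0 - sq2 k * h.eval (sq2 k)) :
    rotScaleMatrix k * A * (rotScaleMatrix k)ᵀ = sq2 k • isotropicField m z n h k := by
  simp only [isotropicField, hm, hn]
  generalize z.eval (sq2 k) = c at hz
  generalize h.eval (sq2 k) = d at hh
  ext i j
  fin_cases i <;> fin_cases j <;>
    simp [rotScaleMatrix, J0mat, perp2, mul_apply, vecMul, dotProduct, vecMulVec_apply,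
      Fin.sum_univ_two, hz, hh, sq2] <;> ring

namespace IsRotationEquivariant

variable {Q : (Fin 2 → ℝ) → Matrix (Fin 2) (Fin 2) ℝ} (hQ : IsRotationEquivariant Q)
include hQ

theorem apply_neg (k : Fin 2 → ℝ) : Q (-k) = Q k := by
  simpa [neg_mulVec] using hQ (-1) (by simp) (by simp [det_neg]) k

theorem commute_apply_zero {R : Matrix (Fin 2) (Fin 2) ℝ} (hR : Rᵀ * R = 1)
    (hdet : R.det = 1) : Commute R (Q 0) :=
  calc R * Q 0 = R * Q 0 * Rᵀ * R := by rw [Matrix.mul_assoc _ Rᵀ, hR, Matrix.mul_one]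
    _ = Q 0 * R := by rw [← hQ R hR hdet 0, mulVec_zero]

theorem sq2_smul_apply (k : Fin 2 → ℝ) :
    sq2 k • Q k = rotScaleMatrix k * Q ![√(sq2 k), 0] * (rotScaleMatrix k)ᵀ := by
  rcases eq_or_ne k 0 with rfl | hk
  · simp [rotScaleMatrix_zero, sq2]
  have hs := sq2_pos hk
  set r := √(sq2 k)
  have hr : r ^ 2 = sq2 k := Real.sq_sqrt hs.le
  have hr0 : r ≠ 0 := by positivity
  set R := r⁻¹ • rotScaleMatrix k
  have hRT : Rᵀ * R = 1 := by
    rw [transpose_smul, smul_mul_smul_comm, transpose_rotScaleMatrix_mul_self, smul_smul, ← sq,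
      inv_pow, hr, inv_mul_cancel₀ hs.ne', one_smul]
  have hdet : R.det = 1 := by
    rw [det_smul, det_rotScaleMatrix, Fintype.card_fin, inv_pow, hr, inv_mul_cancel₀ hs.ne']
  have hRk : R *ᵥ ![r, 0] = k := by
    rw [smul_mulVec, rotScaleMatrix_mulVec_axis, smul_smul, inv_mul_cancel₀ hr0, one_smul]
  have hQk := hQ R hRT hdet ![r, 0]
  rw [hRk] at hQk
  rw [hQk, ← hr]
  simp only [R, transpose_smul, Matrix.smul_mul, Matrix.mul_smul, smul_smul]
  rw [show r ^ 2 * (r⁻¹ * r⁻¹) = 1 by field_simp, one_smul]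

theorem exists_apply_axis_eq_eval_sq {P : Matrix (Fin 2) (Fin 2) (MvPolynomial (Fin 2) ℝ)}
    (hP : ∀ k i j, Q k i j = MvPolynomial.eval k (P i j)) :
    ∃ B : Matrix (Fin 2) (Fin 2) ℝ[X], ∀ r i j, Q ![r, 0] i j = (B i j).eval (r ^ 2) := by
  have (i j : Fin 2) : ∃ g : ℝ[X], ∀ r, Q ![r, 0] i j = g.eval (r ^ 2) := by
    obtain ⟨p, hp⟩ := (P i j).exists_polynomial_eval_eq_eval ![X, 0]
    have hpQ (r : ℝ) : p.eval r = Q ![r, 0] i j := by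
      rw [hp, hP]; congr; ext l; fin_cases l <;> simp
    obtain ⟨g, hg⟩ := exists_eval_sq_of_even (p := p) fun r => by
      rw [hpQ, hpQ, ← hQ.apply_neg]; simp
    exact ⟨g, fun r => (hpQ r).symm.trans (hg r)⟩
  choose B hB using this
  exact ⟨Matrix.of B, fun r i j => hB i j r⟩

theorem exists_eq_isotropicField {P : Matrix (Fin 2) (Fin 2) (MvPolynomial (Fin 2) ℝ)}
    (hP : ∀ k i j, Q k i j = MvPolynomial.eval k (P i j)) :
    ∃ m z n h : ℝ[X], ∀ k, Q k = isotropicField m z n h k := by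
  obtain ⟨B, hB⟩ := hQ.exists_apply_axis_eq_eval_sq hP
  have hB0 (i j : Fin 2) : Q 0 i j = (B i j).eval 0 := by
    simpa [← Matrix.zero_empty, Matrix.cons_zero_zero] using hB 0 i j
  obtain ⟨h11, h10⟩ :=
    commute_J0mat_iff.mp (hQ.commute_apply_zero transpose_J0mat_mul_self det_J0mat)
  rw [hB0, hB0] at h11 h10
  obtain ⟨z, hz⟩ : X ∣ B 0 0 - B 1 1 := X_dvd_iff.mpr (by simp [coeff_zero_eq_eval_zero, h11])
  obtain ⟨h, hh⟩ : X ∣ -(B 0 1 + B 1 0) := X_dvd_iff.mpr (by simp [coeff_zero_eq_eval_zero, h10])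
  -- `B = [[m + X z, n - X h], [-n, m]]`
  refine ⟨B 1 1, z, -B 1 0, h, fun k => ?_⟩
  rcases eq_or_ne k 0 with rfl | hk
  · ext i j; fin_cases i <;> fin_cases j <;> simp [isotropicField, sq2, J0mat, hB0, h11, h10]
  apply smul_right_injective _ (sq2_pos hk).ne'
  beta_reduce
  have hA (i j : Fin 2) : Q ![√(sq2 k), 0] i j = (B i j).eval (sq2 k) := by
    rw [hB, Real.sq_sqrt (sq2_nonneg k)]
  have hz' := congrArg (eval (sq2 k)) hz
  have hh' := congrArg (eval (sq2 k)) hh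
  simp only [eval_sub, eval_mul, eval_X, eval_add, eval_neg] at hz' hh'
  rw [hQ.sq2_smul_apply]
  exact rotScaleMatrix_mul_mul_transpose (by rw [hA]) (by rw [hA, eval_neg])
    (by rw [hA, hA]; linarith) (by rw [hA, hA]; linarith)

end IsRotationEquivariant

/-- a polynomial matrix field `Q : ℝ² → M₂(ℝ)` satisfies
`Q(Rk) = R Q(k) Rᵀ` for all rotations `R` iff
`Q(k) = m(s) I₂ + z(s) k kᵀ + n(s) J₀ + h(s) k (k^⊥)ᵀ` with `s = s(k)`. -/
theorem rotation_equivariant_matrix_field_2d (Q : (Fin 2 → ℝ) → Matrix (Fin 2) (Fin 2) ℝ)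
    (hQ : ∃ P : Matrix (Fin 2) (Fin 2) (MvPolynomial (Fin 2) ℝ),
      ∀ (k : Fin 2 → ℝ) (i j : Fin 2), Q k i j = MvPolynomial.eval k (P i j)) :
    (∀ R : Matrix (Fin 2) (Fin 2) ℝ, Rᵀ * R = 1 → R.det = 1 →
      ∀ k : Fin 2 → ℝ, Q (R.mulVec k) = R * Q k * Rᵀ)
    ↔ ∃ m z n h : Polynomial ℝ, ∀ (k : Fin 2 → ℝ) (i j : Fin 2),
        Q k i j = Polynomial.eval (sq2 k) m * (1 : Matrix (Fin 2) (Fin 2) ℝ) i j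
          + Polynomial.eval (sq2 k) z * (k i * k j)
          + Polynomial.eval (sq2 k) n * J0mat i j
          + Polynomial.eval (sq2 k) h * (k i * perp2 k j) := by
  obtain ⟨P, hP⟩ := hQ
  constructor
  · intro hequiv
    obtain ⟨m, z, n, h, hQiso⟩ := IsRotationEquivariant.exists_eq_isotropicField hequiv hP
    exact ⟨m, z, n, h, fun k i j => by rw [hQiso, isotropicField_apply]⟩
  · rintro ⟨m, z, n, h, hQiso⟩
    obtain rfl : Q = isotropicField m z n h :=
      funext fun k => Matrix.ext fun i j => by rw [hQiso, isotropicField_apply]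
    exact isRotationEquivariant_isotropicField m z n h
end

section
/- If the sequences (α_ℓ)_{ℓ≥1} and (β_m)_{m≥0} with β₀ = E satisfy the consistency identities X(t) = 𝔸(t) + 𝔅(t)·𝔹(t) and 𝔹(t)·X(t) = ℂ(t) + 𝔻(t)·𝔹(t), then α₂ = A₂ + B₂·E + B₁·β₁ − (1/2)·α₁², and β₂ = S⁻¹·( C₂ + D₂·E + D₁·β₁ − E·α₂ − β₁·α₁ − (1/2)·E·α₁² ). -/
/-- `seriesPow a j p` is the coefficient of `t^p` in `F(t)^j`,
where `F(t) = Σ_{ℓ≥0} t^ℓ a_ℓ` (in the application `a 0 = 0`, so that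
`F(t) = Σ_{ℓ≥1} t^ℓ a_ℓ`). -/
def seriesPow {A : Type*} [Ring A] (a : ℕ → A) : ℕ → ℕ → A
  | 0, p => if p = 0 then 1 else 0
  | j + 1, p => ∑ ij ∈ Finset.HasAntidiagonal.antidiagonal p, a ij.1 * seriesPow a j ij.2

/-- `Xcoef α p` is the coefficient of `t^p` in `X(t) = Σ_{j≥0} (1/j!) F(t)^j`,
where `F(t) = Σ_{ℓ≥1} t^ℓ α_ℓ` (encoded by `α 0 = 0`, so that the coefficient of
`t^p` in `F(t)^j` vanishes for `j > p`). -/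
def Xcoef {n : Type*} [Fintype n] [DecidableEq n] {R : Type*} [CommRing R] [Algebra ℚ R]
    (α : ℕ → Matrix n n R) (p : ℕ) : Matrix n n R :=
  ∑ j ∈ Finset.range (p + 1), ((j.factorial : ℚ)⁻¹) • seriesPow α j p

/-! Comparing the coefficients of `t²` in both identities. Since `α₀ = 0`, the exponential
contributes `X₀ = 1`, `X₁ = α₁`, `X₂ = α₂ + α₁²/2`, so the first identity is already solved for
`α₂`. In the second, `D₀β₂ = β₂ - Sβ₂` cancels against `β₂X₀` and leaves `Sβ₂` alone on one
side; `S` is diagonal with unit entries, hence invertible. -/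

open Finset

theorem Finset.Nat.sum_antidiagonal_two {M : Type*} [AddCommMonoid M] (f : ℕ × ℕ → M) :
    ∑ ij ∈ antidiagonal 2, f ij = f (0, 2) + f (1, 1) + f (2, 0) := by
  rw [Nat.sum_antidiagonal_eq_sum_range_succ_mk]
  simp only [sum_range_succ, sum_range_zero, zero_add]

section seriesPow

variable {A : Type*} [Ring A] (a : ℕ → A)

@[simp]
theorem seriesPow_zero_zero : seriesPow a 0 0 = 1 := rfl

@[simp]
theorem seriesPow_zero_of_ne_zero {p : ℕ} (hp : p ≠ 0) : seriesPow a 0 p = 0 := if_neg hp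

@[simp]
theorem seriesPow_one (p : ℕ) : seriesPow a 1 p = a p := by
  rw [seriesPow, sum_eq_single (p, 0)]
  · simp
  · rintro ⟨i, j⟩ hij hne
    rw [HasAntidiagonal.mem_antidiagonal] at hij
    have hj : j ≠ 0 := by rintro rfl; simp_all
    simp [hj]
  · simp

theorem seriesPow_two_two (ha : a 0 = 0) : seriesPow a 2 2 = a 1 * a 1 := by
  rw [seriesPow, Nat.sum_antidiagonal_two]
  simp [ha]

end seriesPow

section Xcoef

variable {n : Type*} [Fintype n] [DecidableEq n] {R : Type*} [CommRing R] [Algebra ℚ R]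
  {α : ℕ → Matrix n n R}

theorem Xcoef_zero : Xcoef α 0 = 1 := by
  simp [Xcoef]

theorem Xcoef_one : Xcoef α 1 = α 1 := by
  simp [Xcoef, sum_range_succ]

theorem Xcoef_two (hα : α 0 = 0) : Xcoef α 2 = α 2 + (2⁻¹ : ℚ) • (α 1 * α 1) := by
  simp [Xcoef, sum_range_succ, seriesPow_two_two α hα]

end Xcoef

theorem Matrix.IsDiag.isUnit {n R : Type*} [Fintype n] [DecidableEq n] [CommRing R]
    {S : Matrix n n R} (hS : S.IsDiag) (hu : ∀ i, IsUnit (S i i)) : IsUnit S := by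
  rw [← (isDiag_iff_diagonal_diag S).mp hS, isUnit_diagonal]
  exact Pi.isUnit_iff.mpr hu

theorem taylor_expansion_second_order_general (N q : ℕ)
    (R : Type*) [CommRing R] [Algebra ℚ R]
    (A : ℕ → Matrix (Fin N) (Fin N) R) (B : ℕ → Matrix (Fin N) (Fin (q - N)) R)
    (C : ℕ → Matrix (Fin (q - N)) (Fin N) R) (D : ℕ → Matrix (Fin (q - N)) (Fin (q - N)) R)
    (E : Matrix (Fin (q - N)) (Fin N) R) (S : Matrix (Fin (q - N)) (Fin (q - N)) R)
    (hSdiag : S.IsDiag) (hSunit : ∀ i, IsUnit (S i i))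
    (hB0 : B 0 = 0) (hD0 : D 0 = 1 - S)
    (α : ℕ → Matrix (Fin N) (Fin N) R) (β : ℕ → Matrix (Fin (q - N)) (Fin N) R)
    (hα0 : α 0 = 0) (hβ0 : β 0 = E)
    (hid1 : ∀ p : ℕ, Xcoef α p = A p + ∑ ij ∈ Finset.HasAntidiagonal.antidiagonal p, B ij.1 * β ij.2)
    (hid2 : ∀ p : ℕ, ∑ ij ∈ Finset.HasAntidiagonal.antidiagonal p, β ij.1 * Xcoef α ij.2
        = C p + ∑ ij ∈ Finset.HasAntidiagonal.antidiagonal p, D ij.1 * β ij.2) :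
    α 2 = A 2 + B 2 * E + B 1 * β 1 - ((2 : ℚ)⁻¹) • (α 1 * α 1)
    ∧ β 2 = S⁻¹ * (C 2 + D 2 * E + D 1 * β 1 - E * α 2 - β 1 * α 1
        - ((2 : ℚ)⁻¹) • (E * (α 1 * α 1))) := by
  have h1 := hid1 2
  have h2 := hid2 2
  rw [Xcoef_two hα0, Nat.sum_antidiagonal_two, hB0, hβ0] at h1
  rw [Nat.sum_antidiagonal_two, Nat.sum_antidiagonal_two, Xcoef_two hα0, Xcoef_one,
    Xcoef_zero, hβ0, hD0] at h2
  have hα2 : α 2 = A 2 + B 2 * E + B 1 * β 1 - (2⁻¹ : ℚ) • (α 1 * α 1) := by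
    linear_combination (norm := skip) h1
    simp only [Matrix.zero_mul]
    abel
  have hSβ2 : S * β 2 = C 2 + D 2 * E + D 1 * β 1 - E * α 2 - β 1 * α 1
      - (2⁻¹ : ℚ) • (E * (α 1 * α 1)) := by
    linear_combination (norm := skip) h2
    simp only [Matrix.mul_add, Matrix.mul_smul, Matrix.mul_one, Matrix.sub_mul, Matrix.one_mul]
    abel
  refine ⟨hα2, ?_⟩
  have hSdet : IsUnit S.det := (S.isUnit_iff_isUnit_det).mp (hSdiag.isUnit hSunit)
  rw [← hSβ2, Matrix.nonsing_inv_mul_cancel_left S (β 2) hSdet]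

/-- if `(α_ℓ)_{ℓ≥1}`, `(β_m)_{m≥0}` with `β₀ = E` satisfy
`X(t) = 𝔸(t) + 𝔅(t)𝔹(t)` and `𝔹(t)X(t) = ℂ(t) + 𝔻(t)𝔹(t)`, then
`α₂ = A₂ + B₂E + B₁β₁ − (1/2)α₁²` and
`β₂ = S⁻¹(C₂ + D₂E + D₁β₁ − Eα₂ − β₁α₁ − (1/2)Eα₁²)`. -/
theorem taylor_expansion_second_order (N q : ℕ) (hN : 1 ≤ N) (hq : N < q)
    (R : Type*) [CommRing R] [Algebra ℚ R]
    (A : ℕ → Matrix (Fin N) (Fin N) R) (B : ℕ → Matrix (Fin N) (Fin (q - N)) R)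
    (C : ℕ → Matrix (Fin (q - N)) (Fin N) R) (D : ℕ → Matrix (Fin (q - N)) (Fin (q - N)) R)
    (E : Matrix (Fin (q - N)) (Fin N) R) (S : Matrix (Fin (q - N)) (Fin (q - N)) R)
    (hSdiag : S.IsDiag) (hSunit : ∀ i, IsUnit (S i i))
    (hA0 : A 0 = 1) (hB0 : B 0 = 0) (hC0 : C 0 = S * E) (hD0 : D 0 = 1 - S)
    (α : ℕ → Matrix (Fin N) (Fin N) R) (β : ℕ → Matrix (Fin (q - N)) (Fin N) R)
    (hα0 : α 0 = 0) (hβ0 : β 0 = E)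
    (hid1 : ∀ p : ℕ, Xcoef α p = A p + ∑ ij ∈ Finset.HasAntidiagonal.antidiagonal p, B ij.1 * β ij.2)
    (hid2 : ∀ p : ℕ, ∑ ij ∈ Finset.HasAntidiagonal.antidiagonal p, β ij.1 * Xcoef α ij.2
        = C p + ∑ ij ∈ Finset.HasAntidiagonal.antidiagonal p, D ij.1 * β ij.2) :
    α 2 = A 2 + B 2 * E + B 1 * β 1 - ((2 : ℚ)⁻¹) • (α 1 * α 1)
    ∧ β 2 = S⁻¹ * (C 2 + D 2 * E + D 1 * β 1 - E * α 2 - β 1 * α 1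
        - ((2 : ℚ)⁻¹) • (E * (α 1 * α 1))) :=
  taylor_expansion_second_order_general N q R A B C D E S hSdiag hSunit hB0 hD0 α β hα0 hβ0 hid1
    hid2
end
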